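/- Let θ be a non-constant inner function, u, v unit vectors in H² with S*v ≠ 0, and R₁ = H_{θ̄} + ⟨·, u⟩ v. Then Ker R₁ ⊆ zθH² ⊕ span{θ Jv}. -/

import Mathlib

noncomputable section

open MeasureTheory Complex
open scoped ENNReal ComplexConjugate

namespace Hardy

instance fact_one_pos : Fact ((0:ℝ) < 1) := ⟨one_pos⟩
instance fact_one_le_top : Fact ((1:ℝ≥0∞) ≤ ∞) := ⟨le_top⟩

/-- The unit circle, modelled additively as `ℝ/ℤ`. -/
abbrev Circ := AddCircle (1 : ℝ)
/-- Normalized Haar (arc-length) measure on the circle. -/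
abbrev μT : Measure Circ := AddCircle.haarAddCircle
/-- The Lebesgue space `L²(𝕋)`. -/
abbrev L2 : Type := Lp ℂ 2 μT
/-- The space `L^∞(𝕋)`. -/
abbrev Linf : Type := Lp ℂ ⊤ μT

/-- Multiplication of an `L²` function by an `L^∞` function. -/
def mul (φ : Linf) (f : L2) : L2 :=
  MemLp.toLp ((φ : Circ → ℂ) • (f : Circ → ℂ))
    ((Lp.memLp f).smul (Lp.memLp φ))

/-- Multiplication in `L^∞`. -/
def mulInf (φ ψ : Linf) : Linf :=
  MemLp.toLp ((φ : Circ → ℂ) • (ψ : Circ → ℂ))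
    ((Lp.memLp ψ).smul (Lp.memLp φ))

/-- Complex conjugation on `L^∞`. -/
def conjInf (φ : Linf) : Linf :=
  MemLp.toLp (fun x => conj ((φ : Circ → ℂ) x))
    (Complex.isometry_conj.lipschitz.comp_memLp (map_zero _) (Lp.memLp φ))

/-- Negation on the circle preserves Haar measure. -/
lemma negMP : MeasurePreserving (fun x : Circ => -x) μT μT :=
  Measure.measurePreserving_neg μT

/-- The flip operator `J` on `L²`: `(Jf)(ξ) = f(ξ̄)`, i.e. `x ↦ f(-x)`. -/
def J (f : L2) : L2 := Lp.compMeasurePreserving (fun x : Circ => -x) negMP f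

/-- The flip operator on `L^∞`. -/
def Jinf (φ : Linf) : Linf := Lp.compMeasurePreserving (fun x : Circ => -x) negMP φ

/-- The Hardy space `H²`, the closed span of the nonnegative Fourier modes in `L²`. -/
def H2 : Submodule ℂ L2 :=
  (Submodule.span ℂ (Set.range fun n : ℕ => (fourierLp 2 (n : ℤ) : L2))).topologicalClosure

instance : CompleteSpace H2 :=
  IsClosed.completeSpace_coe (hs := Submodule.isClosed_topologicalClosure _)

/-- The Riesz (orthogonal) projection `P : L² → H²` (viewed as a map into `L²`). -/
def P (f : L2) : L2 := (H2.orthogonalProjectionOnto f : L2)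

/-- The `n`-th Fourier coefficient of `f ∈ L²`.  For `f ∈ H²`, `coeff f 0 = f(0)`,
the value at the origin of the holomorphic extension. -/
def coeff (f : L2) (n : ℤ) : ℂ := inner ℂ ((fourierLp 2 n : L2)) f

/-- The `H²` inner product (inherited from `L²`), conjugate-linear in the first slot. -/
def ip (f g : L2) : ℂ := inner ℂ f g

/-- The symbol `z` as an element of `L^∞`. -/
def zsym : Linf := fourierLp ⊤ 1
/-- The symbol `z̄` as an element of `L^∞`. -/
def zbar : Linf := fourierLp ⊤ (-1)

/-- The unilateral (forward) shift `S` on `L²` (restricting to `H²`): `f ↦ z f`. -/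
def shift (f : L2) : L2 := mul zsym f
/-- The backward shift `S* = T_{z̄}` on `H²`: `f ↦ P(z̄ f)`. -/
def bshift (f : L2) : L2 := P (mul zbar f)

/-- The Toeplitz operator `T_φ f = P(φ f)`. -/
def toep (φ : Linf) (f : L2) : L2 := P (mul φ f)
/-- The Hankel operator `H_φ f = P J(φ f)`. -/
def hank (φ : Linf) (f : L2) : L2 := P (J (mul φ f))

/-- The constant function `1` in `L²`. -/
def one2 : L2 := fourierLp 2 0
/-- The canonical image of an `L^∞` function in `L²`. -/
def toL2 (φ : Linf) : L2 := mul φ one2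

/-- `φ ∈ L^∞` belongs to `H^∞`, i.e. multiplication by `φ` preserves `H²`. -/
def IsHinf (φ : Linf) : Prop := ∀ f ∈ H2, mul φ f ∈ H2

/-- `θ` is an inner function: `θ ∈ H^∞` and `|θ| = 1` a.e. on the circle. -/
def IsInner (θ : Linf) : Prop :=
  IsHinf θ ∧ ∀ᵐ x ∂μT, ‖(θ : Circ → ℂ) x‖ = 1

/-- `θ` is non-constant (as an a.e.-defined function). -/
def NonConst (θ : Linf) : Prop := ¬ ∃ c : ℂ, (θ : Circ → ℂ) =ᵐ[μT] fun _ => c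

/-- The shift-invariant subspace `θH² = {θ g : g ∈ H²}`. -/
def thetaH2 (θ : Linf) : Set L2 := {g | ∃ f ∈ H2, g = mul θ f}

end Hardy

namespace Hardy

/-- The kernel of the `n`-rank perturbed Hankel operator
`R_n h = H_φ h + ∑ ⟨h, uᵢ⟩ vᵢ`, as a subset of `H²`. -/
def kerR (φ : Linf) {n : ℕ} (u v : Fin n → L2) : Set L2 :=
  {h | h ∈ H2 ∧ hank φ h + ∑ i, ip (u i) h • v i = 0}

end Hardy

open Hardy

namespace Hardy

lemma coeFn_mul (φ : Linf) (f : L2) :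
    (mul φ f : Circ → ℂ) =ᵐ[μT] fun x => (φ : Circ → ℂ) x * (f : Circ → ℂ) x := by
  filter_upwards [MemLp.coeFn_toLp ((Lp.memLp f).smul (r := 2) (Lp.memLp φ))] with x hx
  exact hx

lemma coeFn_conjInf (φ : Linf) :
    (conjInf φ : Circ → ℂ) =ᵐ[μT] fun x => conj ((φ : Circ → ℂ) x) :=
  MemLp.coeFn_toLp _

lemma coeFn_J (f : L2) : (J f : Circ → ℂ) =ᵐ[μT] fun x => (f : Circ → ℂ) (-x) :=
  Lp.coeFn_compMeasurePreserving f negMP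

lemma coeFn_zsym : (zsym : Circ → ℂ) =ᵐ[μT] fourier 1 := coeFn_fourierLp ⊤ 1

lemma coeFn_zbar : (zbar : Circ → ℂ) =ᵐ[μT] fourier (-1) := coeFn_fourierLp ⊤ (-1)

lemma conj_mul_self_ae (θ : Linf) (hθ : IsInner θ) :
    ∀ᵐ x ∂μT, conj ((θ : Circ → ℂ) x) * (θ : Circ → ℂ) x = 1 := by
  filter_upwards [hθ.2] with x hx
  have h2 : ‖(θ : Circ → ℂ) x‖ = 1 := hx
  rw [mul_comm, Complex.mul_conj, Complex.normSq_eq_norm_sq, h2]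
  norm_num

lemma fourier_negArg (k : ℤ) (x : Circ) : fourier k (-x) = fourier (-k) x := by
  rw [fourier_apply, fourier_apply, smul_neg, ← neg_smul]

lemma fourier_mul_fourier (k l : ℤ) (x : Circ) :
    fourier k x * fourier l x = fourier (k + l) x := (fourier_add).symm

/-- comp with neg respects a.e. equality -/
lemma ae_comp_neg {g g' : Circ → ℂ} (h : g =ᵐ[μT] g') :
    (fun x : Circ => g (-x)) =ᵐ[μT] fun x : Circ => g' (-x) := by
  have h2 : g =ᵐ[Measure.map (fun x : Circ => -x) μT] g' := by
    rw [negMP.map_eq]; exact h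
  exact MeasureTheory.ae_eq_comp negMP.measurable.aemeasurable h2

lemma J_smul (a : ℂ) (x : L2) : J (a • x) = a • J x := by
  apply Lp.ext
  filter_upwards [coeFn_J (a • x), Lp.coeFn_smul a (J x), coeFn_J x,
    ae_comp_neg (Lp.coeFn_smul a x)] with y h1 h2 h3 h4
  simp only [h1, h2, h3, h4, Pi.smul_apply, smul_eq_mul]

lemma J_J (x : L2) : J (J x) = x := by
  apply Lp.ext
  filter_upwards [coeFn_J (J x), ae_comp_neg (coeFn_J x)] with y h1 h2
  rw [h1, h2]
  simp

lemma P_add (x y : L2) : P (x + y) = P x + P y := by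
  simp [P, map_add]

lemma P_smul (a : ℂ) (x : L2) : P (a • x) = a • P x := by
  simp [P, _root_.map_smul]

lemma fourierLp_mem_H2 {n : ℤ} (hn : 0 ≤ n) : (fourierLp 2 n : L2) ∈ H2 := by
  refine Submodule.le_topologicalClosure _ (Submodule.subset_span ?_)
  exact ⟨n.toNat, by simp [Int.toNat_of_nonneg hn]⟩

lemma mem_H2_of_coeff (f : L2)
    (hf : ∀ n : ℤ, n < 0 → (inner ℂ (fourierLp 2 n : L2) f : ℂ) = 0) : f ∈ H2 := by
  have hsum : HasSum (fun i : ℤ => fourierBasis.repr f i • (fourierBasis i : L2)) f :=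
    fourierBasis.hasSum_repr f
  have hmem : ∀ F : Finset ℤ, (∑ i ∈ F, fourierBasis.repr f i • (fourierBasis i : L2)) ∈
      (Submodule.span ℂ (Set.range fun n : ℕ => (fourierLp 2 (n : ℤ) : L2)) : Set L2) := by
    intro F
    refine Submodule.sum_mem _ fun i _ => ?_
    rcases lt_or_ge i 0 with hi | hi
    · have hz : fourierBasis.repr f i = 0 := by
        rw [fourierBasis.repr_apply_apply, coe_fourierBasis]
        exact hf i hi
      simp [hz]
    · refine Submodule.smul_mem _ _ (Submodule.subset_span ?_)
      exact ⟨i.toNat, by rw [coe_fourierBasis]; simp [Int.toNat_of_nonneg hi]⟩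
  have hcl : f ∈ closure
      ((Submodule.span ℂ (Set.range fun n : ℕ => (fourierLp 2 (n : ℤ) : L2))) : Set L2) :=
    mem_closure_of_tendsto hsum (Filter.Eventually.of_forall hmem)
  show f ∈ H2
  unfold H2
  rw [← SetLike.mem_coe, Submodule.topologicalClosure_coe]
  exact hcl

lemma inner_fourier (k : ℤ) (g : L2) :
    (inner ℂ (fourierLp 2 k : L2) g : ℂ) = ∫ x, fourier (-k) x * (g : Circ → ℂ) x ∂μT := by
  rw [MeasureTheory.L2.inner_def]
  refine integral_congr_ae ?_
  filter_upwards [coeFn_fourierLp 2 k] with x hx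
  rw [RCLike.inner_apply', hx, ← fourier_neg]

end Hardy



namespace Hardy

lemma J_add (x y : L2) : J (x + y) = J x + J y :=
  map_add (Lp.compMeasurePreserving (fun x : Circ => -x) negMP) x y

lemma shift_mul_recover (θ : Linf) (hθ : IsInner θ) (g : L2) :
    shift (mul θ (mul zbar (mul (conjInf θ) g))) = g := by
  apply Lp.ext
  filter_upwards [coeFn_mul zsym (mul θ (mul zbar (mul (conjInf θ) g))),
    coeFn_mul θ (mul zbar (mul (conjInf θ) g)),
    coeFn_mul zbar (mul (conjInf θ) g),
    coeFn_mul (conjInf θ) g, coeFn_conjInf θ, coeFn_zsym, coeFn_zbar,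
    conj_mul_self_ae θ hθ] with x h1 h2 h3 h4 h5 h6 h7 h8
  show ((mul zsym (mul θ (mul zbar (mul (conjInf θ) g))) : L2) : Circ → ℂ) x = (g : Circ → ℂ) x
  rw [h1, h2, h3, h4, h5, h6, h7]
  have hz : (fourier 1 : C(Circ, ℂ)) x * (fourier (-1) : C(Circ, ℂ)) x = 1 := by
    rw [fourier_mul_fourier]
    norm_num
  calc (fourier 1 : C(Circ, ℂ)) x * ((θ : Circ → ℂ) x *
        ((fourier (-1) : C(Circ, ℂ)) x * (conj ((θ : Circ → ℂ) x) * (g : Circ → ℂ) x)))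
      = ((fourier 1 : C(Circ, ℂ)) x * (fourier (-1) : C(Circ, ℂ)) x) *
        ((conj ((θ : Circ → ℂ) x) * (θ : Circ → ℂ) x) * (g : Circ → ℂ) x) := by ring
    _ = (g : Circ → ℂ) x := by rw [hz, h8, one_mul, one_mul]

lemma mul_conjInf_split (θ : Linf) (hθ : IsInner θ) (h : L2) (c : ℂ) (v : L2) :
    mul (conjInf θ) (h + c • mul θ (J v)) = mul (conjInf θ) h + c • J v := by
  apply Lp.ext
  filter_upwards [coeFn_mul (conjInf θ) (h + c • mul θ (J v)), coeFn_conjInf θ,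
    Lp.coeFn_add h (c • mul θ (J v)), Lp.coeFn_smul c (mul θ (J v)), coeFn_mul θ (J v),
    Lp.coeFn_add (mul (conjInf θ) h) (c • J v), Lp.coeFn_smul c (J v),
    coeFn_mul (conjInf θ) h, conj_mul_self_ae θ hθ] with x h1 h2 h3 h4 h5 h6 h7 h8 h9
  rw [h1, h6]
  simp only [Pi.add_apply, Pi.smul_apply, smul_eq_mul] at h3 h4 h7 ⊢
  rw [h3, h4, h5, h7, h8, h2]
  calc conj ((θ : Circ → ℂ) x) * ((h : Circ → ℂ) x + c * ((θ : Circ → ℂ) x * (J v : Circ → ℂ) x))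
      = conj ((θ : Circ → ℂ) x) * (h : Circ → ℂ) x +
        c * ((conj ((θ : Circ → ℂ) x) * (θ : Circ → ℂ) x) * (J v : Circ → ℂ) x) := by ring
    _ = _ := by rw [h9, one_mul]

end Hardy

/-- for `R₁ = H_{θ̄} + ⟨·,u⟩v`, one has `Ker R₁ ⊆ zθH² ⊕ span{θJv}`. -/
theorem kerR_subset_shifted_thetaH2_add_span
    (θ : Linf) (hθ : IsInner θ) (hθc : NonConst θ)
    (u v : L2) (hu1 : ‖u‖ = 1) (hv1 : ‖v‖ = 1)
    (huH : u ∈ H2) (hvH : v ∈ H2) (hv0 : bshift v ≠ 0) :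
    ∀ h ∈ kerR (conjInf θ) (fun _ : Fin 1 => u) (fun _ : Fin 1 => v),
      ∃ f ∈ H2, ∃ lam : ℂ, h = shift (mul θ f) + lam • mul θ (J v) := by
  rintro h ⟨hH2, heq⟩
  simp only [Fin.sum_univ_one] at heq
  have heq' : hank (conjInf θ) h = -(ip u h • v) := eq_neg_of_add_eq_zero_left heq
  set c : ℂ := ip u h with hc
  refine ⟨mul zbar (mul (conjInf θ) (h + c • mul θ (J v))), ?_, -c, ?_⟩
  · -- membership in H2
    set w : L2 := mul (conjInf θ) (h + c • mul θ (J v)) with hwdef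
    have hweq : w = mul (conjInf θ) h + c • J v := mul_conjInf_split θ hθ h c v
    have hPJw : P (J w) = 0 := by
      rw [hweq, J_add, J_smul, J_J, P_add, P_smul]
      have h5 : P (J (mul (conjInf θ) h)) = -(c • v) := heq'
      have hPv : P v = v := Submodule.starProjection_eq_self_iff.mpr hvH
      rw [h5, hPv]
      simp
    have hperp : J w ∈ H2ᗮ := by
      have hz : H2.orthogonalProjectionOnto (J w) = 0 := by
        exact_mod_cast Submodule.coe_eq_zero.mp hPJw
      exact Submodule.orthogonalProjectionOnto_eq_zero_iff.mp hz
    apply mem_H2_of_coeff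
    intro n hn
    have hA : (inner ℂ (fourierLp 2 n : L2) (mul zbar w) : ℂ)
        = ∫ x, fourier (-(n+1)) x * (w : Circ → ℂ) x ∂μT := by
      rw [inner_fourier]
      refine integral_congr_ae ?_
      filter_upwards [coeFn_mul zbar w, coeFn_zbar] with x h1 h2
      rw [h1, h2, ← mul_assoc, fourier_mul_fourier]
      have hi : -n + -1 = -(n+1) := by ring
      rw [hi]
    have hB : (inner ℂ (fourierLp 2 (-(n+1)) : L2) (J w) : ℂ)
        = ∫ x, fourier (-(n+1)) x * (w : Circ → ℂ) x ∂μT := by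
      rw [inner_fourier]
      have hi : -(-(n+1)) = n + 1 := by ring
      rw [hi]
      have h1 : ∫ x, fourier (n+1) x * ((J w) : Circ → ℂ) x ∂μT
          = ∫ x, fourier (n+1) x * (w : Circ → ℂ) (-x) ∂μT := by
        refine integral_congr_ae ?_
        filter_upwards [coeFn_J w] with x h2
        rw [h2]
      rw [h1]
      have h3 := negMP.integral_comp (MeasurableEquiv.neg Circ).measurableEmbedding
        (fun y : Circ => fourier (-(n+1)) y * (w : Circ → ℂ) y)
      rw [← h3]
      refine integral_congr_ae (Filter.Eventually.of_forall fun x => ?_)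
      show fourier (n+1) x * (w : Circ → ℂ) (-x) = fourier (-(n+1)) (-x) * (w : Circ → ℂ) (-x)
      rw [fourier_negArg, hi]
    have hB0 : (inner ℂ (fourierLp 2 (-(n+1)) : L2) (J w) : ℂ) = 0 := by
      have hm : (0:ℤ) ≤ -(n+1) := by omega
      exact (Submodule.mem_orthogonal H2 (J w)).mp hperp _ (fourierLp_mem_H2 hm)
    rw [hA, ← hB, hB0]
  · rw [shift_mul_recover θ hθ]
    module
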